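/- The number of words w over the alphabet {α, c} of length 3n with exactly n occurrences of c and 2n occurrences of α, such that every prefix w' satisfies |w'|_α ≤ 2|w'|_c, equals (1/(2n+1)) * C(3n, n). -/

import Mathlib

inductive PStep | alpha | c
deriving DecidableEq

def IsProjectedWalk (n : ℕ) (w : List PStep) : Prop :=
  w.length = 3 * n ∧ w.count PStep.c = n ∧ w.count PStep.alpha = 2 * n ∧
    ∀ p : List PStep, p <+: w → p.count PStep.alpha ≤ 2 * p.count PStep.c

namespace CLAux
open List Finset

instance : Fintype PStep :=
  ⟨{PStep.alpha, PStep.c}, by intro x; cases x <;> simp⟩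

def sval : PStep → ℤ | PStep.c => 2 | PStep.alpha => -1

def sg (p : List PStep) : ℤ := (p.map sval).sum

lemma sg_append (a b : List PStep) : sg (a ++ b) = sg a + sg b := by simp [sg]

lemma sg_eq_counts (p : List PStep) :
    sg p = 2 * (p.count PStep.c : ℤ) - (p.count PStep.alpha : ℤ) := by
  induction p with
  | nil => simp [sg]
  | cons x l ih => cases x <;> simp [sg, sval, List.count_cons] at ih ⊢ <;> omega

lemma length_eq_counts (p : List PStep) :
    p.length = p.count PStep.c + p.count PStep.alpha := by
  induction p with
  | nil => simp
  | cons x l ih => cases x <;> simp [List.count_cons, ih] <;> omega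

lemma count_ofFn (N : ℕ) (g : Fin N → PStep) (a : PStep) :
    (List.ofFn g).count a = (Finset.univ.filter fun i => g i = a).card := by
  induction N with
  | zero => simp
  | succ N ih =>
      have h2 : (Finset.univ.filter fun i : Fin (N+1) => g i = a).card
          = (if g 0 = a then 1 else 0) + (Finset.univ.filter fun i : Fin N => g i.succ = a).card := by
        rw [Finset.card_filter, Fin.sum_univ_succ, ← Finset.card_filter]
      rw [List.ofFn_succ, List.count_cons, ih, h2]
      by_cases h : g 0 = a <;> simp [h, Function.comp] <;> omega

lemma exists_ofFn (N : ℕ) (u : List PStep) (h : u.length = N) :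
    ∃ g : Fin N → PStep, List.ofFn g = u := by
  subst h; exact ⟨u.get, List.ofFn_get u⟩

def allLists (N : ℕ) : Finset (List PStep) :=
  (Finset.univ : Finset (Fin N → PStep)).image List.ofFn

lemma mem_allLists {N : ℕ} {u : List PStep} : u ∈ allLists N ↔ u.length = N := by
  constructor
  · rintro h
    simp only [allLists, Finset.mem_image] at h
    obtain ⟨g, -, rfl⟩ := h
    simp
  · intro h
    obtain ⟨g, rfl⟩ := exists_ofFn N u h
    simp [allLists]

lemma card_count_c (N m : ℕ) :
    ((allLists N).filter (fun u => u.count PStep.c = m)).card = N.choose m := by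
  have key := Finset.card_bij
    (s := Finset.powersetCard m (Finset.univ : Finset (Fin N)))
    (t := (allLists N).filter (fun u => u.count PStep.c = m))
    (i := fun T _ => List.ofFn (fun i => if i ∈ T then PStep.c else PStep.alpha))
    ?_ ?_ ?_
  · rw [← key, Finset.card_powersetCard, Finset.card_fin]
  · intro T hT
    rw [Finset.mem_powersetCard_univ] at hT
    rw [Finset.mem_filter, mem_allLists]
    refine ⟨by simp, ?_⟩
    rw [count_ofFn]
    rw [show (Finset.univ.filter fun i =>
        (if i ∈ T then PStep.c else PStep.alpha) = PStep.c) = T from by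
      ext i; by_cases h : i ∈ T <;> simp [h]]
    exact hT
  · intro T₁ h₁ T₂ h₂ h
    rw [List.ofFn_inj] at h
    ext i
    have := congrFun h i
    by_cases hi : i ∈ T₁ <;> by_cases hj : i ∈ T₂ <;> simp_all
  · intro u hu
    rw [Finset.mem_filter, mem_allLists] at hu
    obtain ⟨g, rfl⟩ := exists_ofFn N u hu.1
    refine ⟨Finset.univ.filter fun i => g i = PStep.c, ?_, ?_⟩
    · rw [Finset.mem_powersetCard_univ, ← count_ofFn]; exact hu.2
    · rw [List.ofFn_inj]
      funext i
      by_cases h : g i = PStep.c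
      · simp [h]
      · have : g i = PStep.alpha := by cases hg : g i <;> simp_all
        simp [h, this]

/-- Dominating: every proper prefix has nonnegative sum. -/
def Dom (u : List PStep) : Prop := ∀ i < u.length, 0 ≤ sg (u.take i)

instance : DecidablePred Dom := fun u => by unfold Dom; infer_instance

lemma sg_take_drop (u : List PStep) (k i : ℕ) :
    sg (u.take (k + i)) = sg (u.take k) + sg ((u.drop k).take i) := by
  rw [List.take_add, sg_append]

lemma sg_drop (u : List PStep) (k : ℕ) :
    sg (u.drop k) = sg u - sg (u.take k) := by
  conv_lhs => rw [show sg (u.drop k) = sg (u.take k ++ u.drop k) - sg (u.take k) from by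
    rw [sg_append]; ring]
  rw [List.take_append_drop]

lemma sg_rotate_low (u : List PStep) (k i : ℕ) (hk : k ≤ u.length) (hi : i ≤ u.length - k) :
    sg ((u.rotate k).take i) = sg (u.take (k + i)) - sg (u.take k) := by
  rw [List.rotate_eq_drop_append_take hk,
    List.take_append_of_le_length (by simpa using hi), sg_take_drop]
  ring

lemma sg_rotate_high (u : List PStep) (k j : ℕ) (hk : k ≤ u.length) (hj : j ≤ k) :
    sg ((u.rotate k).take (u.length - k + j)) = sg u - sg (u.take k) + sg (u.take j) := by
  rw [List.rotate_eq_drop_append_take hk]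
  rw [show u.length - k = (u.drop k).length from by simp, List.take_length_add_append,
    sg_append, sg_drop, List.take_take, min_eq_left hj]

/-- Uniqueness: a dominating word with total sum -1 has no other dominating rotation. -/
lemma dom_rotate_unique (u : List PStep) (hT : sg u = -1) (hu : Dom u)
    (j : ℕ) (hj1 : 0 < j) (hj2 : j < u.length) (hd : Dom (u.rotate j)) : False := by
  have hlen : (u.rotate j).length = u.length := by simp
  have h1 : sg ((u.rotate j).take (u.length - j + 0)) = sg u - sg (u.take j) + sg (u.take 0) :=
    sg_rotate_high u j 0 (le_of_lt hj2) (Nat.zero_le _)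
  simp only [Nat.add_zero, List.take_zero] at h1
  have h2 : 0 ≤ sg ((u.rotate j).take (u.length - j)) := hd _ (by rw [hlen]; omega)
  have h3 : 0 ≤ sg (u.take j) := hu j hj2
  have h0 : sg ([] : List PStep) = 0 := rfl
  rw [h0] at h1
  omega

/-- Existence: any word with total sum -1 has a dominating rotation. -/
lemma dom_rotate_exists (u : List PStep) (hT : sg u = -1) :
    ∃ k < u.length, Dom (u.rotate k) := by
  set N := u.length with hN
  have hN0 : 0 < N := by
    rcases u with _ | ⟨x, l⟩
    · simp [sg] at hT
    · simp [hN]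
  -- minimum of prefix sums over [0, N]
  obtain ⟨b, hb, hbmin⟩ := Finset.exists_min_image (Finset.range (N + 1)) (fun i => sg (u.take i))
    ⟨0, by simp⟩
  have hex : ∃ k, k ≤ N ∧ ∀ i ≤ N, sg (u.take k) ≤ sg (u.take i) := by
    refine ⟨b, by simpa using Nat.lt_succ_iff.mp (Finset.mem_range.mp hb), fun i hi => ?_⟩
    exact hbmin i (Finset.mem_range.mpr (Nat.lt_succ_of_le hi))
  classical
  obtain ⟨k, ⟨hkN, hkmin⟩, hkfirst⟩ :
      ∃ k, (k ≤ N ∧ ∀ i ≤ N, sg (u.take k) ≤ sg (u.take i)) ∧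
        ∀ j < k, ¬(j ≤ N ∧ ∀ i ≤ N, sg (u.take j) ≤ sg (u.take i)) :=
    ⟨Nat.find hex, Nat.find_spec hex, fun j hj => Nat.find_min hex hj⟩
  have hMneg : sg (u.take k) ≤ -1 := by
    have := hkmin N le_rfl
    rw [List.take_of_length_le (le_of_eq hN.symm)] at this
    omega
  have hk0 : 0 < k := by
    rcases Nat.eq_zero_or_pos k with h | h
    · rw [h] at hMneg; simp [sg] at hMneg
    · exact h
  have hlt : ∀ j < k, sg (u.take k) < sg (u.take j) := by
    intro j hjk
    have hnot := hkfirst j hjk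
    push_neg at hnot
    obtain ⟨i, hi, hlt'⟩ := hnot (le_trans (le_of_lt hjk) hkN)
    have := hkmin i hi
    omega
  by_cases hkeq : k = N
  · -- u itself is dominating
    have hMval : sg (u.take k) = -1 := by
      rw [hkeq, List.take_of_length_le (le_of_eq hN.symm)]; exact hT
    refine ⟨0, hN0, ?_⟩
    rw [List.rotate_zero]
    intro i hi
    have := hlt i (by omega)
    omega
  · have hkN' : k < N := lt_of_le_of_ne hkN hkeq
    refine ⟨k, hkN', ?_⟩
    intro i hi
    rw [List.length_rotate] at hi
    by_cases hcase : i ≤ N - k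
    · rw [sg_rotate_low u k i hkN (by omega)]
      have := hkmin (k + i) (by omega)
      omega
    · have hj : i = N - k + (i - (N - k)) := by omega
      rw [hj, sg_rotate_high u k (i - (N - k)) hkN (by omega)]
      have := hlt (i - (N - k)) (by omega)
      omega

lemma rotate_cancel {g : List PStep} (hT : sg g = -1) (hg : Dom g) {a b : ℕ}
    (ha : a < g.length) (hb : b < g.length) (h : g.rotate a = g.rotate b) : a = b := by
  set N := g.length with hN
  have hself : g.rotate (b + (N - a)) = g := by
    rw [← List.rotate_rotate, ← h, List.rotate_rotate,
      show a + (N - a) = N from by omega, hN, List.rotate_length]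
  have hmod : g.rotate ((b + (N - a)) % N) = g := by
    rw [hN, List.rotate_mod]; exact hself
  have hj : (b + (N - a)) % N = 0 := by
    by_contra hj0
    exact dom_rotate_unique g hT hg _ (Nat.pos_of_ne_zero hj0)
      (Nat.mod_lt _ (by omega)) (by rw [hmod]; exact hg)
  have := Nat.dvd_of_mod_eq_zero hj
  obtain ⟨t, ht⟩ := this
  -- b + (N - a) ∈ [1, 2N-1], so t = 1 and a = b
  have h1 : 1 ≤ b + (N - a) := by omega
  have h2 : b + (N - a) ≤ 2 * N - 1 := by omega
  rcases t with _ | _ | t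
  · omega
  · omega
  · exfalso
    have h3 : 2 * N ≤ b + (N - a) := by
      rw [ht]
      calc 2 * N = N * 2 := by ring
        _ ≤ N * (t + 1 + 1) := Nat.mul_le_mul_left N (by omega)
    omega

lemma sg_total {n : ℕ} {u : List PStep} (hlen : u.length = 3 * n + 1)
    (hc : u.count PStep.c = n) : sg u = -1 := by
  have h1 := length_eq_counts u
  have h2 := sg_eq_counts u
  rw [hlen, hc] at h1
  have h3 : u.count PStep.alpha = 2 * n + 1 := by omega
  rw [hc, h3] at h2
  rw [h2]; push_cast; ring

def GoodSet (n : ℕ) : Finset (List PStep) :=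
  (allLists (3 * n + 1)).filter (fun u => u.count PStep.c = n ∧ Dom u)

lemma card_good_mul (n : ℕ) :
    (GoodSet n).card * (3 * n + 1) = (3 * n + 1).choose n := by
  rw [← card_count_c (3 * n + 1) n]
  rw [show (GoodSet n).card * (3 * n + 1)
      = ((GoodSet n) ×ˢ Finset.range (3 * n + 1)).card from by
    rw [Finset.card_product, Finset.card_range]]
  apply Finset.card_bij (i := fun p _ => p.1.rotate p.2)
  · rintro ⟨g, k⟩ hp
    rw [Finset.mem_product, Finset.mem_range] at hp
    obtain ⟨hg, hk⟩ := hp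
    rw [GoodSet, Finset.mem_filter, mem_allLists] at hg
    rw [Finset.mem_filter, mem_allLists, List.length_rotate]
    exact ⟨hg.1, by rw [(List.rotate_perm g k).count_eq]; exact hg.2.1⟩
  · rintro ⟨g, k⟩ hp ⟨g', k'⟩ hp' h
    simp only at h
    rw [Finset.mem_product, Finset.mem_range] at hp hp'
    obtain ⟨hg, hk⟩ := hp
    obtain ⟨hg', hk'⟩ := hp'
    rw [GoodSet, Finset.mem_filter, mem_allLists] at hg hg'
    have hN : g.length = 3 * n + 1 := hg.1
    have hN' : g'.length = 3 * n + 1 := hg'.1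
    have hTg : sg g = -1 := sg_total hN hg.2.1
    have hTg' : sg g' = -1 := sg_total hN' hg'.2.1
    -- g' = g.rotate ((k + (N - k')) % N)
    have key : g' = g.rotate ((k + (g.length - k')) % g.length) := by
      rw [List.rotate_mod, ← List.rotate_rotate, h, List.rotate_rotate,
        show k' + (g.length - k') = g'.length from by omega, List.rotate_length]
    have hjlt : (k + (g.length - k')) % g.length < g.length :=
      Nat.mod_lt _ (by omega)
    have hj0 : (k + (g.length - k')) % g.length = 0 := by
      by_contra hj0
      exact dom_rotate_unique g hTg hg.2.2 _ (Nat.pos_of_ne_zero hj0) hjlt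
        (by rw [← key]; exact hg'.2.2)
    have hgg' : g' = g := by rw [key, hj0, List.rotate_zero]
    subst hgg'
    have : k = k' := rotate_cancel hTg hg.2.2 (by omega) (by omega) h
    simp [this]
  · intro u hu
    rw [Finset.mem_filter, mem_allLists] at hu
    have hT : sg u = -1 := sg_total hu.1 hu.2
    obtain ⟨k, hk, hdom⟩ := dom_rotate_exists u hT
    have hN : u.length = 3 * n + 1 := hu.1
    refine ⟨(u.rotate k, (u.length - k) % u.length), ?_, ?_⟩
    · rw [Finset.mem_product, Finset.mem_range]
      constructor
      · rw [GoodSet, Finset.mem_filter, mem_allLists, List.length_rotate]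
        exact ⟨hN, by rw [(List.rotate_perm u k).count_eq]; exact hu.2, hdom⟩
      · rw [← hN]
        exact Nat.mod_lt _ (by omega)
    · simp only
      rw [show ((u.rotate k).rotate ((u.length - k) % u.length)) =
          (u.rotate k).rotate (u.length - k) from by
        rw [← List.length_rotate u k, List.rotate_mod]]
      rw [List.rotate_rotate, show k + (u.length - k) = u.length from by omega,
        List.rotate_length]

def PW (n : ℕ) : Finset (List PStep) :=
  (allLists (3 * n)).filter (fun w => w.count PStep.c = n ∧ ∀ i ≤ 3 * n, 0 ≤ sg (w.take i))

lemma walk_iff (n : ℕ) (w : List PStep) : IsProjectedWalk n w ↔ w ∈ PW n := by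
  constructor
  · rintro ⟨hlen, hc, ha, hpre⟩
    rw [PW, Finset.mem_filter, mem_allLists]
    refine ⟨hlen, hc, fun i hi => ?_⟩
    have hp : (w.take i) <+: w := List.take_prefix i w
    have := hpre _ hp
    have h2 := sg_eq_counts (w.take i)
    rw [h2]
    push_cast
    omega
  · intro hw
    rw [PW, Finset.mem_filter, mem_allLists] at hw
    obtain ⟨hlen, hc, hpre⟩ := hw
    have hl := length_eq_counts w
    refine ⟨hlen, hc, by omega, fun p hp => ?_⟩
    have hple : p.length ≤ 3 * n := by rw [← hlen]; exact hp.length_le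
    have hpt : p = w.take p.length := List.prefix_iff_eq_take.mp hp
    have := hpre p.length hple
    rw [← hpt] at this
    have h2 := sg_eq_counts p
    omega

lemma card_pw_eq_good (n : ℕ) : (PW n).card = (GoodSet n).card := by
  apply Finset.card_bij (i := fun w _ => w ++ [PStep.alpha])
  · intro w hw
    rw [PW, Finset.mem_filter, mem_allLists] at hw
    obtain ⟨hlen, hc, hpre⟩ := hw
    rw [GoodSet, Finset.mem_filter, mem_allLists]
    refine ⟨by simp [hlen], by simp [List.count_append, hc], fun i hi => ?_⟩
    simp only [List.length_append, List.length_singleton, hlen] at hi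
    rw [List.take_append_of_le_length (by omega)]
    exact hpre i (by omega)
  · intro w₁ h₁ w₂ h₂ h
    simpa using h
  · intro u hu
    rw [GoodSet, Finset.mem_filter, mem_allLists] at hu
    obtain ⟨hlen, hc, hdom⟩ := hu
    have hne : u ≠ [] := by intro h; rw [h] at hlen; simp at hlen
    have hsplit : u.dropLast ++ [u.getLast hne] = u := List.dropLast_append_getLast hne
    have hdl : u.dropLast = u.take (3 * n) := by
      rw [List.dropLast_eq_take, hlen]
      norm_num
    have h1 : 0 ≤ sg (u.take (3 * n)) := hdom (3 * n) (by omega)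
    have hT : sg u = -1 := sg_total hlen hc
    have hlast : u.getLast hne = PStep.alpha := by
      by_contra hco
      have hgc : u.getLast hne = PStep.c := by cases hg : u.getLast hne <;> simp_all
      have : sg u = sg u.dropLast + sg [PStep.c] := by
        conv_lhs => rw [← hsplit]
        rw [sg_append, hgc]
      rw [hdl] at this
      have hsgc : sg [PStep.c] = 2 := rfl
      rw [hsgc] at this
      omega
    refine ⟨u.dropLast, ?_, by rw [← hlast]; exact hsplit⟩
    rw [PW, Finset.mem_filter, mem_allLists]
    refine ⟨by rw [List.length_dropLast, hlen]; omega, ?_, fun i hi => ?_⟩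
    · have : u.count PStep.c = u.dropLast.count PStep.c + ([u.getLast hne]).count PStep.c := by
        conv_lhs => rw [← hsplit]
        rw [List.count_append]
      rw [hlast] at this
      simp at this
      omega
    · rw [hdl, List.take_take, min_eq_left hi]
      exact hdom i (by omega)

lemma choose_identity (n : ℕ) :
    (3 * n + 1).choose n * (2 * n + 1) = (3 * n).choose n * (3 * n + 1) := by
  have h1 := Nat.add_one_mul_choose_eq (3 * n) (2 * n)
  have h2 : (3 * n).choose (2 * n) = (3 * n).choose n := by
    rw [← Nat.choose_symm (by omega : 2 * n ≤ 3 * n), show 3 * n - 2 * n = n from by omega]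
  have h3 : (3 * n + 1).choose (2 * n + 1) = (3 * n + 1).choose n := by
    rw [← Nat.choose_symm (by omega : 2 * n + 1 ≤ 3 * n + 1),
      show 3 * n + 1 - (2 * n + 1) = n from by omega]
  rw [h2, h3] at h1
  exact h1.symm.trans (mul_comm _ _)

end CLAux

theorem projected_walks_count (n : ℕ) :
    (Set.ncard {w : List PStep | IsProjectedWalk n w}) * (2 * n + 1)
      = Nat.choose (3 * n) n := by
  have hset : {w : List PStep | IsProjectedWalk n w} = ↑(CLAux.PW n) := by
    ext w
    simp only [Set.mem_setOf_eq, Finset.coe_filter, CLAux.walk_iff n w, Finset.mem_coe]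
  rw [hset, Set.ncard_coe_finset, CLAux.card_pw_eq_good]
  have h1 := CLAux.card_good_mul n
  have h2 := CLAux.choose_identity n
  have h3 : (CLAux.GoodSet n).card * (2 * n + 1) * (3 * n + 1)
      = (3 * n).choose n * (3 * n + 1) := by
    calc (CLAux.GoodSet n).card * (2 * n + 1) * (3 * n + 1)
        = (CLAux.GoodSet n).card * (3 * n + 1) * (2 * n + 1) := by ring
      _ = (3 * n + 1).choose n * (2 * n + 1) := by rw [h1]
      _ = (3 * n).choose n * (3 * n + 1) := h2
  exact Nat.eq_of_mul_eq_mul_right (by omega) h3
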